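/- Let X be a countable set with a metric d, M the multiplication operator (M f)(x) = e^{μ d(x, y₀)} f(x) for fixed y₀ ∈ X and μ > 0, and H a self-adjoint operator on ℓ²(X) whose matrix elements H(x,x') vanish unless d(x,x') ≤ 1, with |H(x,x')| ≤ 1 for x ≠ x' and each x having at most 2n neighbors at distance 1. Then ‖M H M^{-1} − H‖ ≤ 2n(e^{μ} − 1). -/

import Mathlib

/-!
The matrix of `B` is `(e^{μ(d(x,y₀) - d(x',y₀))} - 1) H(x,x')`. It vanishes on the diagonal and
off the pairs at distance `≤ 1`, and on those pairs the triangle inequality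
`|d(x,y₀) - d(x',y₀)| ≤ d(x,x') ≤ 1` bounds the exponential factor by `e^μ - 1`. So every row and
every column of `B` has at most `2n` nonzero entries, each of modulus at most `e^μ - 1`, and the
Schur test gives `‖B‖ ≤ 2n(e^μ - 1)`.
-/

noncomputable def delta {X : Type*} [DecidableEq X] (x : X) : lp (fun _ : X => ℂ) 2 :=
  lp.single 2 x 1

open Finset

theorem abs_exp_mul_sub_one_le {μ t : ℝ} (hμ : 0 ≤ μ) (ht : |t| ≤ 1) :
    |Real.exp (μ * t) - 1| ≤ Real.exp μ - 1 := by
  rw [abs_le] at ht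
  have h_upper : Real.exp (μ * t) ≤ Real.exp μ := Real.exp_le_exp.2 (by nlinarith)
  have h_lower : Real.exp (-μ) ≤ Real.exp (μ * t) := Real.exp_le_exp.2 (by nlinarith)
  have h_cosh : 2 ≤ Real.exp μ + Real.exp (-μ) := by
    nlinarith [Real.add_one_le_exp μ, Real.add_one_le_exp (-μ)]
  rw [abs_le]
  constructor <;> linarith

theorem sum_sum_le_card_mul_sum_biUnion {α : Type*} [DecidableEq α] (s : Finset α)
    (S : α → Finset α) {N : ℕ} (hcard : ∀ x, #(S x) ≤ N)
    (hsymm : ∀ x x', x' ∈ S x → x ∈ S x') {g : α → ℝ} (hg : ∀ x, 0 ≤ g x) :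
    ∑ x ∈ s, ∑ x' ∈ S x, g x' ≤ N * ∑ x' ∈ s.biUnion S, g x' := by
  rw [sum_comm' (t' := s.biUnion S) (s' := fun x' => {x ∈ s | x' ∈ S x})
    (fun x x' => by simp only [mem_filter, mem_biUnion]; grind), mul_sum]
  refine sum_le_sum fun x' _ => ?_
  rw [sum_const, nsmul_eq_mul]
  have h_sub : {x ∈ s | x' ∈ S x} ⊆ S x' := fun x hx => hsymm x x' (mem_filter.1 hx).2
  exact mul_le_mul_of_nonneg_right
    (by exact_mod_cast (card_le_card h_sub).trans (hcard x')) (hg x')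

notation "ℓ²(" X ")" => lp (fun _ : X => ℂ) 2

section Schur

variable {X : Type*} [DecidableEq X]

theorem inner_delta_left (x : X) (f : ℓ²(X)) : inner ℂ (delta x) f = f x := by
  simp [delta, lp.inner_single_left]

theorem single_eq_smul_delta (x : X) (z : ℂ) : lp.single 2 x z = z • delta x := by
  rw [delta, ← lp.single_smul, smul_eq_mul, mul_one]

theorem hasSum_inner_delta_mul_apply (T : ℓ²(X) →L[ℂ] ℓ²(X)) (f : ℓ²(X)) (x : X) :
    HasSum (fun x' => inner ℂ (delta x) (T (delta x')) * f x') (T f x) := by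
  have h := ((lp.hasSum_single (by norm_num) f).mapL T).mapL (innerSL ℂ (delta x))
  simpa [single_eq_smul_delta, inner_delta_left, mul_comm] using h

variable (T : ℓ²(X) →L[ℂ] ℓ²(X)) (S : X → Finset X)

theorem apply_eq_sum_of_inner_delta_eq_zero
    (hsupp : ∀ x x', x' ∉ S x → inner ℂ (delta x) (T (delta x')) = 0) (f : ℓ²(X)) (x : X) :
    T f x = ∑ x' ∈ S x, inner ℂ (delta x) (T (delta x')) * f x' :=
  (hasSum_inner_delta_mul_apply T f x).unique
    (hasSum_sum_of_ne_finset_zero fun x' hx' => by rw [hsupp x x' hx', zero_mul])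

theorem norm_apply_sq_le_of_inner_delta_le {N : ℕ} {C : ℝ} (hcard : ∀ x, #(S x) ≤ N)
    (hsupp : ∀ x x', x' ∉ S x → inner ℂ (delta x) (T (delta x')) = 0)
    (hbound : ∀ x x', x' ∈ S x → ‖inner ℂ (delta x) (T (delta x'))‖ ≤ C)
    (f : ℓ²(X)) (x : X) :
    ‖T f x‖ ^ 2 ≤ C ^ 2 * N * ∑ x' ∈ S x, ‖f x'‖ ^ 2 := by
  have h_row : ‖T f x‖ ≤ C * ∑ x' ∈ S x, ‖f x'‖ := by
    rw [apply_eq_sum_of_inner_delta_eq_zero T S hsupp, mul_sum]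
    refine (norm_sum_le _ _).trans (sum_le_sum fun x' hx' => ?_)
    rw [norm_mul]
    exact mul_le_mul_of_nonneg_right (hbound x x' hx') (norm_nonneg _)
  calc ‖T f x‖ ^ 2 ≤ C ^ 2 * (∑ x' ∈ S x, ‖f x'‖) ^ 2 := by
        rw [← mul_pow]; exact pow_le_pow_left₀ (norm_nonneg _) h_row 2
    _ ≤ C ^ 2 * (#(S x) * ∑ x' ∈ S x, ‖f x'‖ ^ 2) := by
        gcongr; exact sq_sum_le_card_mul_sum_sq
    _ ≤ C ^ 2 * N * ∑ x' ∈ S x, ‖f x'‖ ^ 2 := by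
        rw [← mul_assoc]; gcongr; exact_mod_cast hcard x

-- Schur test: by symmetry of `S`, every column, like every row, has at most `N` nonzero entries.
theorem opNorm_le_of_inner_delta_le {N : ℕ} {C : ℝ} (hC : 0 ≤ C) (hcard : ∀ x, #(S x) ≤ N)
    (hsymm : ∀ x x', x' ∈ S x → x ∈ S x')
    (hsupp : ∀ x x', x' ∉ S x → inner ℂ (delta x) (T (delta x')) = 0)
    (hbound : ∀ x x', x' ∈ S x → ‖inner ℂ (delta x) (T (delta x'))‖ ≤ C) :
    ‖T‖ ≤ N * C := by
  refine T.opNorm_le_bound (by positivity) fun f => ?_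
  refine lp.norm_le_of_forall_sum_le (p := 2) (by norm_num) (by positivity) fun s => ?_
  have h_two : (2 : ENNReal).toReal = 2 := by norm_num
  simp only [h_two, Real.rpow_two]
  calc ∑ x ∈ s, ‖T f x‖ ^ 2 ≤ ∑ x ∈ s, C ^ 2 * N * ∑ x' ∈ S x, ‖f x'‖ ^ 2 :=
        sum_le_sum fun x _ => norm_apply_sq_le_of_inner_delta_le T S hcard hsupp hbound f x
    _ ≤ C ^ 2 * N * (N * ∑ x' ∈ s.biUnion S, ‖f x'‖ ^ 2) := by
        rw [← mul_sum]
        gcongr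
        exact sum_sum_le_card_mul_sum_biUnion s S hcard hsymm fun _ => sq_nonneg _
    _ ≤ C ^ 2 * N * (N * ‖f‖ ^ 2) := by
        gcongr
        simpa [h_two, Real.rpow_two] using lp.sum_rpow_le_norm_rpow (p := 2) (by norm_num) f _
    _ = (N * C * ‖f‖) ^ 2 := by ring

end Schur

theorem stmt7_general {X : Type*} [MetricSpace X] [DecidableEq X]
    (n : ℕ) (μ : ℝ) (hμ : 0 < μ) (y₀ : X)
    (H B : lp (fun _ : X => ℂ) 2 →L[ℂ] lp (fun _ : X => ℂ) 2)
    (hloc : ∀ x x' : X, 1 < dist x x' → (inner ℂ (delta x) (H (delta x')) : ℂ) = 0)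
    (hbd : ∀ x x' : X, x ≠ x' → ‖(inner ℂ (delta x) (H (delta x')) : ℂ)‖ ≤ 1)
    (hfin : ∀ x : X, ({x' : X | x' ≠ x ∧ dist x x' ≤ 1}).Finite)
    (hnb : ∀ x : X, ({x' : X | x' ≠ x ∧ dist x x' ≤ 1}).ncard ≤ 2 * n)
    (hB : ∀ x x' : X, (inner ℂ (delta x) (B (delta x')) : ℂ)
        = ((Real.exp (μ * (dist x y₀ - dist x' y₀)) - 1 : ℝ) : ℂ)
            * (inner ℂ (delta x) (H (delta x')) : ℂ)) :
    ‖B‖ ≤ 2 * n * (Real.exp μ - 1) := by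
  have hc : 0 ≤ Real.exp μ - 1 := by linarith [Real.add_one_le_exp μ]
  let S x := (hfin x).toFinset
  have hS : ∀ x x', x' ∈ S x ↔ x' ≠ x ∧ dist x x' ≤ 1 := fun x x' => (hfin x).mem_toFinset
  have hsupp : ∀ x x', x' ∉ S x → inner ℂ (delta x) (B (delta x')) = 0 := by
    intro x x' hx'
    rw [hS, not_and_or, not_ne_iff, not_le] at hx'
    rcases hx' with rfl | hfar
    · simp [hB]
    · rw [hB, hloc x x' hfar, mul_zero]
  have hbound : ∀ x x', x' ∈ S x → ‖inner ℂ (delta x) (B (delta x'))‖ ≤ Real.exp μ - 1 := by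
    intro x x' hx'
    rw [hS] at hx'
    have h_factor := abs_exp_mul_sub_one_le hμ.le ((abs_dist_sub_le x x' y₀).trans hx'.2)
    rw [hB, norm_mul, Complex.norm_real, Real.norm_eq_abs]
    simpa using mul_le_mul h_factor (hbd x x' hx'.1.symm) (norm_nonneg _) hc
  have hcard : ∀ x, #(S x) ≤ 2 * n := fun x =>
    (Set.ncard_eq_toFinset_card _ (hfin x)).symm.trans_le (hnb x)
  have hsymm : ∀ x x', x' ∈ S x → x ∈ S x' := fun x x' => by
    simp only [hS, dist_comm x x', ne_comm, imp_self]
  simpa using opNorm_le_of_inner_delta_le B S hc hcard hsymm hsupp hbound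

theorem stmt7 {X : Type*} [MetricSpace X] [Countable X] [DecidableEq X]
    (n : ℕ) (μ : ℝ) (hμ : 0 < μ) (y₀ : X)
    (H B : lp (fun _ : X => ℂ) 2 →L[ℂ] lp (fun _ : X => ℂ) 2)
    (hH : IsSelfAdjoint H)
    (hloc : ∀ x x' : X, 1 < dist x x' → (inner ℂ (delta x) (H (delta x')) : ℂ) = 0)
    (hbd : ∀ x x' : X, x ≠ x' → ‖(inner ℂ (delta x) (H (delta x')) : ℂ)‖ ≤ 1)
    (hfin : ∀ x : X, ({x' : X | x' ≠ x ∧ dist x x' ≤ 1}).Finite)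
    (hnb : ∀ x : X, ({x' : X | x' ≠ x ∧ dist x x' ≤ 1}).ncard ≤ 2 * n)
    (hB : ∀ x x' : X, (inner ℂ (delta x) (B (delta x')) : ℂ)
        = ((Real.exp (μ * (dist x y₀ - dist x' y₀)) - 1 : ℝ) : ℂ)
            * (inner ℂ (delta x) (H (delta x')) : ℂ)) :
    ‖B‖ ≤ 2 * n * (Real.exp μ - 1) :=
  stmt7_general n μ hμ y₀ H B hloc hbd hfin hnb hB
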